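/- arXiv:1809.04588 — 2 statements merged into one kernel-verified Lean document; each statement's English description precedes it below -/
import Mathlib

section
/- Let G = G₁ * G₂ be a free product of nontrivial groups where G₂ has at least three elements. Fix a nontrivial a ∈ G₁ and two distinct nontrivial elements b₁, b₂ ∈ G₂. For each r ≥ 1 and each tuple (m₁,…,m_r) ∈ {1,2}^r define g(m₁,…,m_r) = a·b_{m₁}·a·b_{m₂}⋯a·b_{m_r}. Then g(m₁,…,m_r) and g(m'₁,…,m'_r) are conjugate in G if and only if the tuples (m₁,…,m_r) and (m'₁,…,m'_r) agree up to a cyclic permutation. -/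
/-!
If `u` is a cyclically reduced word in a free product, every conjugate `x u x⁻¹` is either the
product of a cyclic rotation of `u` or has a reduced word strictly longer than `u`. This goes by
induction on the reduced word of `x`: its last letter either cancels against the first letter of
`u` (or, after inverting, against the last one), and then the remaining letters of `x` conjugate a
rotation of `u`; or nothing cancels and the conjugate, written out, is reduced and longer. So
cyclically reduced words of the same length are conjugate only if they are rotations of each other.

The word `a b_{m₁} ⋯ a b_{m_r}` is cyclically reduced of length `2r`. Rotating it by an odd amount
makes it start with a letter of `G₂`, while rotating it by `2k` rotates the tuple `m` by `k`.
-/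

open Monoid

lemma List.rotate_ofFn {α : Type*} {n : ℕ} (f : Fin n → α) (s : Fin n) :
    (List.ofFn f).rotate s = List.ofFn fun i => f (i + s) := by
  refine List.ext_getElem (by simp) fun k h₁ h₂ => ?_
  simp only [List.getElem_rotate, List.getElem_ofFn, List.length_ofFn]
  exact congrArg f (Fin.ext (Fin.val_add (⟨k, by simpa using h₂⟩ : Fin n) s).symm)

lemma List.isConj_prod_rotate {G : Type*} [Group G] (l : List G) (n : ℕ) :
    IsConj l.prod (l.rotate n).prod := by
  rw [List.rotate_eq_drop_append_take_mod, List.prod_append]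
  nth_rewrite 1 [← l.take_append_drop (n % l.length)]
  rw [List.prod_append]
  exact isConj_iff.mpr ⟨(l.take (n % l.length)).prod⁻¹, by group⟩

namespace Monoid.CoprodI

variable {ι : Type*} {M : ι → Type*}

lemma isChain_fst_ne_of_map_fst_eq {u v : List (Σ i, M i)}
    (h : u.map Sigma.fst = v.map Sigma.fst) (hv : v.IsChain fun l l' => l.1 ≠ l'.1) :
    u.IsChain fun l l' => l.1 ≠ l'.1 :=
  (List.isChain_map Sigma.fst (R := (· ≠ ·))).mp (h ▸ (List.isChain_map Sigma.fst).mpr hv)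

section Group

variable [∀ i, Group (M i)]

def wordProd (u : List (Σ i, M i)) : CoprodI M := (u.map fun l => of l.2).prod

@[simp] lemma wordProd_nil : wordProd ([] : List (Σ i, M i)) = 1 := rfl

@[simp] lemma wordProd_cons (l : Σ i, M i) (u : List (Σ i, M i)) :
    wordProd (l :: u) = of l.2 * wordProd u := by
  simp [wordProd]

@[simp] lemma wordProd_append (u v : List (Σ i, M i)) :
    wordProd (u ++ v) = wordProd u * wordProd v := by
  simp [wordProd]

def wordInv (u : List (Σ i, M i)) : List (Σ i, M i) := u.reverse.map fun l => ⟨l.1, l.2⁻¹⟩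

@[simp] lemma wordInv_nil : wordInv ([] : List (Σ i, M i)) = [] := rfl

@[simp] lemma wordInv_cons (l : Σ i, M i) (u : List (Σ i, M i)) :
    wordInv (l :: u) = wordInv u ++ [⟨l.1, l.2⁻¹⟩] := by
  simp [wordInv]

@[simp] lemma wordInv_append (u v : List (Σ i, M i)) :
    wordInv (u ++ v) = wordInv v ++ wordInv u := by
  simp [wordInv]

@[simp] lemma wordInv_wordInv (u : List (Σ i, M i)) : wordInv (wordInv u) = u := by
  simp [wordInv, Function.comp_def]

@[simp] lemma length_wordInv (u : List (Σ i, M i)) : (wordInv u).length = u.length := by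
  simp [wordInv]

@[simp] lemma wordProd_wordInv (u : List (Σ i, M i)) :
    wordProd (wordInv u) = (wordProd u)⁻¹ := by
  induction u with
  | nil => simp
  | cons l u ih => simp [ih]

lemma head?_wordInv (u : List (Σ i, M i)) :
    (wordInv u).head? = u.getLast?.map fun l => ⟨l.1, l.2⁻¹⟩ := by
  simp [wordInv, List.head?_reverse]

def IsReduced (u : List (Σ i, M i)) : Prop :=
  (∀ l ∈ u, l.2 ≠ 1) ∧ u.IsChain fun l l' => l.1 ≠ l'.1

lemma isReduced_append {u v : List (Σ i, M i)} :
    IsReduced (u ++ v) ↔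
      IsReduced u ∧ IsReduced v ∧ ∀ x ∈ u.getLast?, ∀ y ∈ v.head?, x.1 ≠ y.1 := by
  simp only [IsReduced, List.isChain_append, List.mem_append]
  grind

lemma isReduced_singleton {c : Σ i, M i} : IsReduced [c] ↔ c.2 ≠ 1 := by
  simp [IsReduced]

lemma isChain_wordInv {u : List (Σ i, M i)} (h : u.IsChain fun l l' => l.1 ≠ l'.1) :
    (wordInv u).IsChain fun l l' => l.1 ≠ l'.1 := by
  rw [wordInv, List.isChain_map, List.isChain_reverse]
  exact h.imp fun _ _ hne => hne.symm

lemma IsReduced.wordInv {u : List (Σ i, M i)} (h : IsReduced u) : IsReduced (wordInv u) := by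
  refine ⟨?_, isChain_wordInv h.2⟩
  simp only [CoprodI.wordInv, List.mem_map, List.mem_reverse]
  rintro _ ⟨l, hl, rfl⟩
  exact inv_ne_one.mpr (h.1 l hl)

lemma IsReduced.eq_of_wordProd_eq {u v : List (Σ i, M i)} (hu : IsReduced u) (hv : IsReduced v)
    (h : wordProd u = wordProd v) : u = v := by
  classical
  exact congrArg Word.toList <|
    Word.equiv.symm.injective (a₁ := ⟨u, hu.1, hu.2⟩) (a₂ := ⟨v, hv.1, hv.2⟩) h

lemma exists_isReduced_wordProd_eq (x : CoprodI M) : ∃ u, IsReduced u ∧ wordProd u = x := by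
  classical
  exact ⟨(Word.equiv x).toList, ⟨(Word.equiv x).ne_one, (Word.equiv x).chain_ne⟩,
    Word.equiv.symm_apply_apply x⟩

def IsCyclicallyReduced (u : List (Σ i, M i)) : Prop :=
  u ≠ [] ∧ (∀ l ∈ u, l.2 ≠ 1) ∧
    Cycle.Chain (fun l l' => l.1 ≠ l'.1) (u : Cycle (Σ i, M i))

lemma isCyclicallyReduced_cons_iff {d : Σ i, M i} {t : List (Σ i, M i)} :
    IsCyclicallyReduced (d :: t) ↔
      (∀ l ∈ d :: t, l.2 ≠ 1) ∧ (d :: (t ++ [d])).IsChain fun l l' => l.1 ≠ l'.1 := by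
  simp [IsCyclicallyReduced]

lemma IsCyclicallyReduced.isReduced {u : List (Σ i, M i)} (h : IsCyclicallyReduced u) :
    IsReduced u := by
  obtain ⟨d, t, rfl⟩ := List.exists_cons_of_ne_nil h.1
  obtain ⟨hne, hchain⟩ := isCyclicallyReduced_cons_iff.mp h
  exact ⟨hne, hchain.prefix ⟨[d], by simp⟩⟩

lemma IsCyclicallyReduced.of_isRotated {u v : List (Σ i, M i)} (h : IsCyclicallyReduced u)
    (hv : v ~r u) : IsCyclicallyReduced v :=
  ⟨fun hv0 => h.1 (List.isRotated_nil_iff'.mp (hv0 ▸ hv)).symm,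
    fun l hl => h.2.1 l (hv.mem_iff.mp hl), Cycle.coe_eq_coe.mpr hv ▸ h.2.2⟩

lemma IsCyclicallyReduced.wordInv {u : List (Σ i, M i)} (h : IsCyclicallyReduced u) :
    IsCyclicallyReduced (wordInv u) := by
  obtain ⟨d, t, rfl⟩ := List.exists_cons_of_ne_nil h.1
  have hletters := h.isReduced.wordInv.1
  have hchain := isChain_wordInv (isCyclicallyReduced_cons_iff.mp h).2
  simp only [wordInv_cons, wordInv_append, wordInv_nil, List.nil_append, List.singleton_append,
    List.mem_append, List.mem_singleton] at hletters hchain ⊢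
  refine (isCyclicallyReduced_cons_iff.mpr ⟨?_, hchain⟩).of_isRotated
    (List.isRotated_concat _ _)
  simpa [or_comm] using hletters

def RotatedOrLonger (u : List (Σ i, M i)) (x : CoprodI M) : Prop :=
  (∃ v, v ~r u ∧ wordProd v = x) ∨
    ∃ w, IsReduced w ∧ u.length < w.length ∧ wordProd w = x

lemma RotatedOrLonger.of_isRotated {u v : List (Σ i, M i)} {x : CoprodI M}
    (h : RotatedOrLonger v x) (hv : v ~r u) : RotatedOrLonger u x := by
  rcases h with ⟨v', hv', rfl⟩ | ⟨w, hw, hlen, rfl⟩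
  · exact .inl ⟨v', hv'.trans hv, rfl⟩
  · exact .inr ⟨w, hw, hv.perm.length_eq ▸ hlen, rfl⟩

lemma RotatedOrLonger.wordInv {u : List (Σ i, M i)} {x : CoprodI M} (h : RotatedOrLonger u x) :
    RotatedOrLonger (wordInv u) x⁻¹ := by
  rcases h with ⟨v, hv, rfl⟩ | ⟨w, hw, hlen, rfl⟩
  · exact .inl ⟨CoprodI.wordInv v, hv.reverse.map _, wordProd_wordInv v⟩
  · exact .inr ⟨CoprodI.wordInv w, hw.wordInv, by simpa using hlen, wordProd_wordInv w⟩

lemma rotatedOrLonger_conj_of_middle {L : List (Σ i, M i)} {c : Σ i, M i}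
    (hL : IsReduced (L ++ [c])) {u w : List (Σ i, M i)} (hw : IsReduced w)
    (hhead : ∀ y ∈ w.head?, y.1 = c.1) (hlast : ∀ y ∈ w.getLast?, y.1 = c.1)
    (hlen : u.length < w.length) :
    RotatedOrLonger u (wordProd L * wordProd w * (wordProd L)⁻¹) := by
  obtain ⟨hL, -, hLc⟩ := isReduced_append.mp hL
  simp only [List.head?_cons, Option.mem_def, Option.some.injEq, forall_eq'] at hLc
  refine .inr ⟨L ++ w ++ CoprodI.wordInv L, ?_, by simp; omega, by simp [mul_assoc]⟩
  refine isReduced_append.mpr ⟨isReduced_append.mpr ⟨hL, hw, ?_⟩, hL.wordInv, ?_⟩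
  · intro x hx y hy
    exact hhead y hy ▸ hLc x hx
  · intro x hx y hy
    rw [Option.mem_def, head?_wordInv, Option.map_eq_some_iff] at hy
    obtain ⟨z, hz, rfl⟩ := hy
    rw [List.getLast?_append_of_ne_nil _ (List.ne_nil_of_length_pos (by omega))] at hx
    exact hlast x hx ▸ (hLc z hz).symm

lemma rotatedOrLonger_conj_of_fst_eq_head {L t : List (Σ i, M i)} {c d : Σ i, M i}
    (hL : IsReduced (L ++ [c])) (hu : IsCyclicallyReduced (d :: t)) (hcd : c.1 = d.1)
    (ih : ∀ v, IsCyclicallyReduced v →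
      RotatedOrLonger v (wordProd L * wordProd v * (wordProd L)⁻¹)) :
    RotatedOrLonger (d :: t)
      (wordProd (L ++ [c]) * wordProd (d :: t) * (wordProd (L ++ [c]))⁻¹) := by
  obtain ⟨i, g⟩ := c
  obtain ⟨j, d⟩ := d
  dsimp only at hcd
  subst hcd
  by_cases hgd : g * d = 1
  · have hg : (of g : CoprodI M) = (of d)⁻¹ := by
      rw [← map_inv, eq_inv_of_mul_eq_one_left hgd]
    have hrot : t ++ [⟨i, d⟩] ~r ⟨i, d⟩ :: t := List.isRotated_concat _ _
    have hconj :
        wordProd (L ++ [⟨i, g⟩]) * wordProd (⟨i, d⟩ :: t) * (wordProd (L ++ [⟨i, g⟩]))⁻¹ =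
        wordProd L * wordProd (t ++ [⟨i, d⟩]) * (wordProd L)⁻¹ := by
      simp only [wordProd_append, wordProd_cons, wordProd_nil, mul_one, hg]
      group
    rw [hconj]
    exact (ih _ (hu.of_isRotated hrot)).of_isRotated hrot
  · obtain ⟨hletters, hchain⟩ := isCyclicallyReduced_cons_iff.mp hu
    have hg : g ≠ 1 := (isReduced_append.mp hL).2.1.1 _ (List.mem_singleton_self _)
    have hw : IsReduced (⟨i, g * d⟩ :: (t ++ [⟨i, g⁻¹⟩]) : List (Σ i, M i)) := by
      refine ⟨?_, isChain_fst_ne_of_map_fst_eq (by simp) hchain⟩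
      simp only [List.mem_cons, List.mem_append, List.not_mem_nil, or_false]
      rintro l (rfl | hl | rfl)
      · exact hgd
      · exact hletters l (List.mem_cons_of_mem _ hl)
      · exact inv_ne_one.mpr hg
    have hconj :
        wordProd (L ++ [⟨i, g⟩]) * wordProd (⟨i, d⟩ :: t) * (wordProd (L ++ [⟨i, g⟩]))⁻¹ =
        wordProd L * wordProd (⟨i, g * d⟩ :: (t ++ [⟨i, g⁻¹⟩])) * (wordProd L)⁻¹ := by
      simp only [wordProd_append, wordProd_cons, wordProd_nil, mul_one, map_mul, map_inv]
      group
    rw [hconj]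
    exact rotatedOrLonger_conj_of_middle hL hw (by simp) (by simp [List.getLast?_cons]) (by simp)

theorem IsCyclicallyReduced.rotatedOrLonger_conj {u : List (Σ i, M i)}
    (hu : IsCyclicallyReduced u) {L : List (Σ i, M i)} (hL : IsReduced L) :
    RotatedOrLonger u (wordProd L * wordProd u * (wordProd L)⁻¹) := by
  induction L using List.reverseRecOn generalizing u with
  | nil => exact .inl ⟨u, .refl u, by simp⟩
  | append_singleton L c ih =>
    have ih' (v) (hv : IsCyclicallyReduced v) := ih hv (isReduced_append.mp hL).1
    obtain ⟨d, t, rfl⟩ := List.exists_cons_of_ne_nil hu.1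
    obtain ⟨t', e, hte⟩ : ∃ t' e, d :: t = t' ++ [e] :=
      ⟨_, _, (List.dropLast_append_getLast (List.cons_ne_nil d t)).symm⟩
    by_cases hcd : c.1 = d.1
    · exact rotatedOrLonger_conj_of_fst_eq_head hL hu hcd ih'
    by_cases hce : c.1 = e.1
    -- `u⁻¹` starts in the factor of `c`, so the head case applies to it
    · have hu' := hu.wordInv
      rw [hte, wordInv_append] at hu'
      simpa [hte, mul_assoc] using (rotatedOrLonger_conj_of_fst_eq_head hL hu' hce ih').wordInv
    have hw : IsReduced ([c] ++ (d :: t) ++ [⟨c.1, c.2⁻¹⟩]) := by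
      have hc := (isReduced_append.mp hL).2.1
      refine isReduced_append.mpr ⟨isReduced_append.mpr ⟨hc, hu.isReduced, ?_⟩,
        isReduced_singleton.mpr (inv_ne_one.mpr (isReduced_singleton.mp hc)), ?_⟩
      · simpa using hcd
      · simpa [hte, List.getLast?_cons] using Ne.symm hce
    have hconj : wordProd (L ++ [c]) * wordProd (d :: t) * (wordProd (L ++ [c]))⁻¹ =
        wordProd L * wordProd ([c] ++ (d :: t) ++ [⟨c.1, c.2⁻¹⟩]) * (wordProd L)⁻¹ := by
      simp only [wordProd_append, wordProd_cons, wordProd_nil, mul_one, map_inv]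
      group
    rw [hconj]
    exact rotatedOrLonger_conj_of_middle hL hw (by simp) (by simp [List.getLast?_cons]) (by simp)

theorem IsCyclicallyReduced.isRotated_of_isConj {u w : List (Σ i, M i)}
    (hu : IsCyclicallyReduced u) (hw : IsReduced w) (hlen : w.length ≤ u.length)
    (h : IsConj (wordProd u) (wordProd w)) : w ~r u := by
  obtain ⟨x, hx⟩ := isConj_iff.mp h
  obtain ⟨L, hL, rfl⟩ := exists_isReduced_wordProd_eq x
  rcases hx ▸ hu.rotatedOrLonger_conj hL with ⟨v, hv, hvw⟩ | ⟨w', hw', hlen', hw'w⟩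
  · rwa [hw.eq_of_wordProd_eq (hu.of_isRotated hv).isReduced hvw.symm]
  · rw [hw'.eq_of_wordProd_eq hw hw'w] at hlen'
    omega

end Group

section AlternatingWord

variable {β : Type*} {i j : ι} (a : M i) (b : β → M j)

def alternatingWord (s : List β) : List (Σ i, M i) :=
  s.flatMap fun x => [⟨i, a⟩, ⟨j, b x⟩]

@[simp] lemma alternatingWord_nil : alternatingWord a b [] = [] := rfl

@[simp] lemma alternatingWord_cons (x : β) (s : List β) :
    alternatingWord a b (x :: s) = ⟨i, a⟩ :: ⟨j, b x⟩ :: alternatingWord a b s := rfl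

@[simp] lemma alternatingWord_append (s s' : List β) :
    alternatingWord a b (s ++ s') = alternatingWord a b s ++ alternatingWord a b s' := by
  simp [alternatingWord]

@[simp] lemma length_alternatingWord (s : List β) :
    (alternatingWord a b s).length = 2 * s.length := by
  induction s with
  | nil => rfl
  | cons x s ih => simp [ih]; ring

lemma alternatingWord_injective (hb : Function.Injective b) :
    Function.Injective (alternatingWord a b) := by
  intro s s' h
  induction s generalizing s' with
  | nil => cases s' <;> simp_all
  | cons x s ih =>
    cases s' with
    | nil => simp at h
    | cons x' s' =>
      simp only [alternatingWord_cons, List.cons.injEq, Sigma.mk.injEq, heq_eq_eq, true_and] at h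
      rw [hb h.1, ih h.2]

lemma alternatingWord_rotate_two_mul (s : List β) (q : ℕ) :
    (alternatingWord a b s).rotate (2 * q) = alternatingWord a b (s.rotate q) := by
  rcases eq_or_ne s [] with rfl | hs
  · simp
  rw [← List.rotate_mod, length_alternatingWord, Nat.mul_mod_mul_left, ← s.rotate_mod q]
  set n := q % s.length
  have hn : n ≤ s.length := (Nat.mod_lt _ (List.length_pos_iff.mpr hs)).le
  calc (alternatingWord a b s).rotate (2 * n)
      = (alternatingWord a b (s.take n) ++ alternatingWord a b (s.drop n)).rotate
          (alternatingWord a b (s.take n)).length := by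
        rw [← alternatingWord_append, List.take_append_drop, length_alternatingWord,
          List.length_take_of_le hn]
    _ = alternatingWord a b (s.rotate n) := by
        rw [List.rotate_append_length_eq, ← alternatingWord_append,
          List.rotate_eq_drop_append_take hn]

lemma isRotated_of_alternatingWord_isRotated (hij : i ≠ j) (hb : Function.Injective b)
    {s s' : List β} (h : alternatingWord a b s ~r alternatingWord a b s') : s ~r s' := by
  obtain ⟨k, hk⟩ := h
  obtain ⟨q, rfl | rfl⟩ := Nat.even_or_odd' k
  · rw [alternatingWord_rotate_two_mul] at hk
    exact ⟨q, alternatingWord_injective a b hb hk⟩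
  · rw [← List.rotate_rotate, alternatingWord_rotate_two_mul] at hk
    rcases hsq : s.rotate q with _ | ⟨x, t⟩
    · rw [hsq] at hk
      exact ⟨q, hsq.trans (alternatingWord_injective a b hb hk)⟩
    · rw [hsq, alternatingWord_cons, List.rotate_cons_succ, List.rotate_zero] at hk
      cases s' with
      | nil => simp at hk
      | cons y s' => simp [hij.symm] at hk

lemma isChain_cons_alternatingWord_append (hij : i ≠ j) (z : M j) (s : List β) :
    (⟨j, z⟩ :: (alternatingWord a b s ++ [⟨i, a⟩])).IsChain fun l l' => l.1 ≠ l'.1 := by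
  induction s generalizing z with
  | nil => simpa using hij.symm
  | cons x s ih => simpa [hij, hij.symm] using ih (b x)

variable [∀ i, Group (M i)]

lemma wordProd_alternatingWord (s : List β) :
    wordProd (alternatingWord a b s) = (s.map fun x => of a * of (b x)).prod := by
  induction s with
  | nil => rfl
  | cons x s ih => simp [ih, mul_assoc]

lemma isCyclicallyReduced_alternatingWord (hij : i ≠ j) (ha : a ≠ 1) (hb : ∀ x, b x ≠ 1)
    {s : List β} (hs : s ≠ []) : IsCyclicallyReduced (alternatingWord a b s) := by
  obtain ⟨x, s, rfl⟩ := List.exists_cons_of_ne_nil hs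
  refine isCyclicallyReduced_cons_iff.mpr ⟨?_, ?_⟩
  · show ∀ l ∈ alternatingWord a b (x :: s), l.2 ≠ 1
    simp only [alternatingWord, List.mem_flatMap, List.mem_cons, List.not_mem_nil, or_false]
    rintro l ⟨y, -, rfl | rfl⟩
    exacts [ha, hb y]
  · exact List.isChain_cons_cons.mpr ⟨hij, isChain_cons_alternatingWord_append a b hij (b x) s⟩

end AlternatingWord

end Monoid.CoprodI

/- Mathlib's normal forms are those of the indexed free product `CoprodI`, so `G₁ ∗ G₂` is mapped
into a free product indexed by `Bool`; `ULift` puts the two factors in one universe. -/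
namespace Monoid.Coprod

universe u v

variable (G₁ : Type u) (G₂ : Type v) [Group G₁] [Group G₂]

def factors : Bool → Type (max u v) := fun i => cond i (ULift.{u} G₂) (ULift.{v} G₁)

instance : ∀ i, Group (factors G₁ G₂ i)
  | false => inferInstanceAs (Group (ULift G₁))
  | true => inferInstanceAs (Group (ULift G₂))

def toCoprodI : G₁ ∗ G₂ →* CoprodI (factors G₁ G₂) :=
  lift ((CoprodI.of (i := false)).comp MulEquiv.ulift.symm.toMonoidHom)
    ((CoprodI.of (i := true)).comp MulEquiv.ulift.symm.toMonoidHom)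

end Monoid.Coprod

theorem conj_iff_cyclic_permutation
    {G₁ G₂ : Type*} [Group G₁] [Group G₂]
    (a : G₁) (ha : a ≠ 1) (b : Fin 2 → G₂) (hb : ∀ i, b i ≠ 1) (hbne : b 0 ≠ b 1)
    (r : ℕ) (hr : 1 ≤ r) (m m' : Fin r → Fin 2) :
    IsConj ((List.ofFn fun i : Fin r => Coprod.inl a * Coprod.inr (b (m i))).prod)
        ((List.ofFn fun i : Fin r => Coprod.inl a * Coprod.inr (b (m' i))).prod) ↔
      ∃ s : Fin r, ∀ i : Fin r, m' i = m (i + s) := by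
  let A : Coprod.factors G₁ G₂ false := ULift.up a
  let B : Fin 2 → Coprod.factors G₁ G₂ true := fun k => ULift.up (b k)
  have hB : Function.Injective B := by
    intro k l h
    replace h : b k = b l := congrArg ULift.down h
    fin_cases k <;> fin_cases l <;> simp_all [eq_comm]
  have hcyc (p : Fin r → Fin 2) :
      CoprodI.IsCyclicallyReduced (CoprodI.alternatingWord A B (List.ofFn p)) :=
    CoprodI.isCyclicallyReduced_alternatingWord A B Bool.false_ne_true
      (fun h => ha (congrArg ULift.down h)) (fun k h => hb k (congrArg ULift.down h))
      (by simp; omega)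
  have himage (p : Fin r → Fin 2) :
      Coprod.toCoprodI G₁ G₂ (List.ofFn fun i => Coprod.inl a * Coprod.inr (b (p i))).prod =
        CoprodI.wordProd (CoprodI.alternatingWord A B (List.ofFn p)) := by
    rw [map_list_prod, CoprodI.wordProd_alternatingWord, List.map_ofFn, List.map_ofFn]
    rfl
  constructor
  · intro h
    have hconj := (Coprod.toCoprodI G₁ G₂).map_isConj h
    rw [himage, himage] at hconj
    obtain ⟨k, hk⟩ :=
      CoprodI.isRotated_of_alternatingWord_isRotated A B Bool.false_ne_true hB
        ((hcyc m).isRotated_of_isConj (hcyc m').isReduced (by simp) hconj).symm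
    rw [← List.rotate_mod, List.length_ofFn] at hk
    refine ⟨⟨k % r, Nat.mod_lt _ hr⟩, fun i => ?_⟩
    rw [List.rotate_ofFn m ⟨k % r, _⟩] at hk
    exact congrFun (List.ofFn_injective hk).symm i
  · rintro ⟨s, hs⟩
    simp_rw [hs]
    rw [← List.rotate_ofFn (fun i => Coprod.inl a * Coprod.inr (b (m i))) s]
    exact List.isConj_prod_rotate _ _
end

section
/- Let G₁ and G₂ be nontrivial finitely generated groups such that at least one of them has at least three elements. Then the free product G₁ * G₂ has exponential growth: for a finite generating set E, the function k ↦ #{g ∈ G : w_E(g) ≤ k} grows exponentially. -/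
/-!
Pick `a ≠ b` nontrivial in `G₁` and `c ≠ 1` in `G₂` (or the other way round). In `G₁ ∗ G₂` the
elements `x = a c` and `y = b c` generate a free monoid: a product of `x`s and `y`s is the reduced
word `a₁ c a₂ c ⋯ aₘ c`, and reduced words are unique. If `C` bounds the word lengths of `x` and
`y`, the `2 ^ m` products of `m` such letters lie in the ball of radius `C m`, so the ball of
radius `k` has at least `2 ^ ⌊k / C⌋` elements.
-/

open Monoid

/-- A group (type) has at least three elements. -/
def HasThree (G : Type*) : Prop := ∃ a b c : G, a ≠ b ∧ a ≠ c ∧ b ≠ c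

/-- Word length of `g` with respect to a (symmetrized) generating set `S`. -/
noncomputable def wordLength {G : Type*} [Group G] (S : Set G) (g : G) : ℕ :=
  sInf {n | ∃ l : List G, (∀ x ∈ l, x ∈ S ∨ x⁻¹ ∈ S) ∧ l.length = n ∧ l.prod = g}

theorem List.injective_flatMap_pair {α β : Type*} {f : α → β} (hf : f.Injective) (b : β) :
    Function.Injective fun l : List α => l.flatMap fun s => [f s, b] := by
  intro l₁ l₂ h
  induction l₁ generalizing l₂ with
  | nil => cases l₂ <;> simp_all
  | cons s l₁ ih =>
    cases l₂ with
    | nil => simp at h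
    | cons t l₂ =>
      simp only [List.flatMap_cons, List.cons_append, List.nil_append, List.cons.injEq] at h
      rw [hf h.1, ih h.2.2]

theorem HasThree.exists_ne_one_ne_one {M : Type*} [One M] (h : HasThree M) :
    ∃ a b : M, a ≠ 1 ∧ b ≠ 1 ∧ a ≠ b := by
  obtain ⟨a, b, c, hab, hac, hbc⟩ := h
  by_cases ha : a = 1
  · subst ha
    exact ⟨b, c, hab.symm, hac.symm, hbc⟩
  by_cases hb : b = 1
  · subst hb
    exact ⟨a, c, ha, hbc.symm, hac⟩
  exact ⟨a, b, ha, hb, hab⟩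

namespace Monoid.CoprodI

variable {ι : Type*} {M : ι → Type*} [∀ i, Monoid (M i)] {α : Type*} {i j : ι}

def Word.alternating (hij : i ≠ j) (f : α → M i) (hf : ∀ s, f s ≠ 1) (c : M j) (hc : c ≠ 1)
    (l : List α) : Word M where
  toList := l.flatMap fun s => [⟨i, f s⟩, ⟨j, c⟩]
  ne_one := by
    simp only [List.mem_flatMap, List.mem_cons, List.not_mem_nil, or_false]
    rintro _ ⟨s, -, rfl | rfl⟩
    exacts [hf s, hc]
  chain_ne := by
    induction l with
    | nil => exact List.isChain_nil
    | cons s l ih =>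
      refine List.isChain_cons.2 ⟨by simpa using hij, List.isChain_cons.2 ⟨?_, ih⟩⟩
      cases l <;> simp [hij.symm]

theorem Word.prod_alternating (hij : i ≠ j) (f : α → M i) (hf : ∀ s, f s ≠ 1) (c : M j)
    (hc : c ≠ 1) (l : List α) :
    (Word.alternating hij f hf c hc l).prod =
      FreeMonoid.lift (fun s => of (f s) * of c) (FreeMonoid.ofList l) := by
  induction l with
  | nil => rfl
  | cons s l ih =>
    simp only [Word.prod, Word.alternating] at ih ⊢
    simp [ih, mul_assoc]

theorem injective_lift_of_mul_of (hij : i ≠ j) {f : α → M i} (hf : f.Injective)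
    (hf1 : ∀ s, f s ≠ 1) {c : M j} (hc : c ≠ 1) :
    Function.Injective (FreeMonoid.lift fun s => (of (f s) * of c : CoprodI M)) := by
  classical
  intro w₁ w₂ h
  have hw : Word.alternating hij f hf1 c hc w₁.toList =
      Word.alternating hij f hf1 c hc w₂.toList :=
    Word.equiv.symm.injective <| by
      change Word.prod _ = Word.prod _
      rwa [Word.prod_alternating, Word.prod_alternating, FreeMonoid.ofList_toList,
        FreeMonoid.ofList_toList]
  exact FreeMonoid.toList.injective <|
    List.injective_flatMap_pair (sigma_mk_injective.comp hf) _ (congrArg Word.toList hw)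

end Monoid.CoprodI

namespace Monoid.Coprod

universe u v

variable {M : Type u} {N : Type v} [Monoid M] [Monoid N]

theorem injective_lift_inl_mul_inr {α : Type*} {f : α → M} (hf : f.Injective)
    (hf1 : ∀ s, f s ≠ 1) {c : N} (hc : c ≠ 1) :
    Function.Injective (FreeMonoid.lift fun s => (inl (f s) * inr c : M ∗ N)) := by
  -- `M` and `N` may live in different universes, so we compare `M ∗ N` with the indexed free
  -- product of their `ULift`s, where reduced words are available.
  let P : Bool → Type (max u v) := fun b => cond b (ULift.{v} M) (ULift.{u} N)
  let _ : ∀ b, Monoid (P b) := fun | true => ULift.monoid | false => ULift.monoid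
  let φ : M ∗ N →* CoprodI P :=
    lift ((CoprodI.of (i := true)).comp MulEquiv.ulift.symm.toMonoidHom)
      ((CoprodI.of (i := false)).comp MulEquiv.ulift.symm.toMonoidHom)
  have hφ : φ.comp (FreeMonoid.lift fun s => inl (f s) * inr c) =
      FreeMonoid.lift fun s =>
        CoprodI.of (i := true) (ULift.up (f s) : P true) *
          CoprodI.of (i := false) (ULift.up c : P false) := by
    rw [FreeMonoid.comp_lift]
    rfl
  refine Function.Injective.of_comp (f := φ) ?_
  rw [← MonoidHom.coe_comp, hφ]
  exact CoprodI.injective_lift_of_mul_of (M := P) (i := true) (j := false)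
    (f := fun s => ULift.up (f s)) (c := ULift.up c) (by decide) (ULift.up_injective.comp hf)
    (fun s h => hf1 s (congrArg ULift.down h)) (fun h => hc (congrArg ULift.down h))

theorem exists_injective_lift_cond_of_hasThree_left [Nontrivial N] (hM : HasThree M) :
    ∃ x y : M ∗ N, Function.Injective (FreeMonoid.lift fun b : Bool => cond b x y) := by
  obtain ⟨a, b, ha, hb, hab⟩ := hM.exists_ne_one_ne_one
  obtain ⟨c, hc⟩ := exists_ne (1 : N)
  refine ⟨inl a * inr c, inl b * inr c, ?_⟩
  have hcond : Function.Injective fun s : Bool => cond s a b := by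
    intro s t hst
    cases s <;> cases t <;> simp_all [eq_comm]
  convert injective_lift_inl_mul_inr hcond (fun s => by cases s <;> assumption) hc using 3
  funext s
  cases s <;> rfl

theorem exists_injective_lift_cond [Nontrivial M] [Nontrivial N]
    (h : HasThree M ∨ HasThree N) :
    ∃ x y : M ∗ N, Function.Injective (FreeMonoid.lift fun b : Bool => cond b x y) := by
  rcases h with hM | hN
  · exact exists_injective_lift_cond_of_hasThree_left hM
  obtain ⟨x, y, hxy⟩ := exists_injective_lift_cond_of_hasThree_left (M := N) (N := M) hN
  refine ⟨swap N M x, swap N M y, ?_⟩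
  convert swap_injective.comp hxy using 1
  rw [← MonoidHom.coe_comp, FreeMonoid.comp_lift]
  congr with s
  cases s <;> rfl

end Monoid.Coprod

section WordLength

variable {G : Type*} [Group G] {S : Set G}

theorem wordLength_list_prod_le_length {l : List G} (hl : ∀ x ∈ l, x ∈ S ∨ x⁻¹ ∈ S) :
    wordLength S l.prod ≤ l.length :=
  Nat.sInf_le ⟨l, hl, rfl, rfl⟩

theorem exists_list_prod_eq_of_closure_eq_top (hS : Subgroup.closure S = ⊤) (g : G) :
    ∃ l : List G, (∀ x ∈ l, x ∈ S ∨ x⁻¹ ∈ S) ∧ l.prod = g := by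
  have hg : g ∈ (Subgroup.closure S).toSubmonoid := hS ▸ Subgroup.mem_top g
  rw [Subgroup.closure_toSubmonoid] at hg
  simpa only [Set.mem_union, Set.mem_inv] using Submonoid.exists_list_of_mem_closure hg

theorem exists_list_length_eq_wordLength (hS : Subgroup.closure S = ⊤) (g : G) :
    ∃ l : List G, (∀ x ∈ l, x ∈ S ∨ x⁻¹ ∈ S) ∧ l.length = wordLength S g ∧ l.prod = g := by
  obtain ⟨l, hl, rfl⟩ := exists_list_prod_eq_of_closure_eq_top hS g
  exact Nat.sInf_mem (s := {n | ∃ l' : List G, (∀ x ∈ l', x ∈ S ∨ x⁻¹ ∈ S) ∧ l'.length = n ∧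
    l'.prod = l.prod}) ⟨l.length, l, hl, rfl, rfl⟩

theorem wordLength_mul_le (hS : Subgroup.closure S = ⊤) (g h : G) :
    wordLength S (g * h) ≤ wordLength S g + wordLength S h := by
  obtain ⟨l₁, hl₁, hlen₁, rfl⟩ := exists_list_length_eq_wordLength hS g
  obtain ⟨l₂, hl₂, hlen₂, rfl⟩ := exists_list_length_eq_wordLength hS h
  rw [← hlen₁, ← hlen₂, ← List.length_append, ← List.prod_append]
  exact wordLength_list_prod_le_length fun x hx => (List.mem_append.1 hx).elim (hl₁ x) (hl₂ x)

theorem wordLength_list_prod_le_sum (hS : Subgroup.closure S = ⊤) (l : List G) :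
    wordLength S l.prod ≤ (l.map (wordLength S)).sum := by
  induction l with
  | nil => exact wordLength_list_prod_le_length (l := []) (by simp)
  | cons g l ih =>
    rw [List.prod_cons, List.map_cons, List.sum_cons]
    exact (wordLength_mul_le hS g l.prod).trans (Nat.add_le_add_left ih _)

theorem finite_setOf_wordLength_le (hS : Subgroup.closure S = ⊤) (hfin : S.Finite) (k : ℕ) :
    {g : G | wordLength S g ≤ k}.Finite := by
  have : Finite ↥(S ∪ S⁻¹) := (hfin.union hfin.inv).to_subtype
  refine ((List.finite_length_le ↥(S ∪ S⁻¹) k).image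
    (fun l => (l.map Subtype.val).prod)).subset fun g hg => ?_
  obtain ⟨l, hl, hlen, rfl⟩ := exists_list_length_eq_wordLength hS g
  refine ⟨l.attach.map fun x => ⟨x.1, hl x.1 x.2⟩, by simpa [hlen] using hg, ?_⟩
  simp [List.map_map]

theorem two_pow_div_le_card_setOf_wordLength_le (hS : Subgroup.closure S = ⊤)
    (hfin : S.Finite) {x y : G}
    (hxy : Function.Injective (FreeMonoid.lift fun b : Bool => cond b x y)) {C : ℕ}
    (hx : wordLength S x ≤ C) (hy : wordLength S y ≤ C) (k : ℕ) :
    2 ^ (k / C) ≤ Nat.card {g : G | wordLength S g ≤ k} := by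
  have : Finite {g : G | wordLength S g ≤ k} := (finite_setOf_wordLength_le hS hfin k).to_subtype
  have hbound (l : List Bool) :
      wordLength S (FreeMonoid.lift (fun b => cond b x y) (FreeMonoid.ofList l)) ≤
        l.length * C := by
    rw [FreeMonoid.lift_ofList]
    refine (wordLength_list_prod_le_sum hS _).trans ?_
    have hC : ∀ n ∈ (l.map fun b => cond b x y).map (wordLength S), n ≤ C := by
      simp only [List.map_map, List.forall_mem_map]
      rintro (_ | _) - <;> assumption
    simpa using List.sum_le_card_nsmul _ C hC
  let ψ (v : Fin (k / C) → Bool) : {g : G | wordLength S g ≤ k} :=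
    ⟨FreeMonoid.lift (fun b => cond b x y) (FreeMonoid.ofList (List.ofFn v)),
      (hbound _).trans (by simpa using Nat.div_mul_le_self k C)⟩
  have hψ : ψ.Injective := fun v w h =>
    List.ofFn_injective (FreeMonoid.ofList.injective (hxy (congrArg Subtype.val h)))
  simpa using Nat.card_le_card_of_injective ψ hψ

end WordLength

theorem exists_one_lt_pow_le_of_two_pow_div_le {f : ℕ → ℝ} {C : ℕ} (hC : 0 < C)
    (h : ∀ k, (2 : ℝ) ^ (k / C) ≤ f k) :
    ∃ lam : ℝ, 1 < lam ∧ ∃ k₀ : ℕ, ∀ k, k₀ ≤ k → lam ^ k ≤ f k := by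
  set lam : ℝ := 2 ^ (((2 * C : ℕ) : ℝ)⁻¹)
  have hlam : 1 < lam := Real.one_lt_rpow one_lt_two (by positivity)
  refine ⟨lam, hlam, C, fun k hk => ?_⟩
  have hk : k ≤ 2 * C * (k / C) := by
    have := Nat.lt_div_mul_add hC (a := k)
    have : 1 ≤ k / C := (Nat.one_le_div_iff hC).2 hk
    nlinarith
  calc lam ^ k ≤ lam ^ (2 * C * (k / C)) := pow_le_pow_right₀ hlam.le hk
    _ = 2 ^ (k / C) := by rw [pow_mul, Real.rpow_inv_natCast_pow zero_le_two (by positivity)]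
    _ ≤ f k := h k

theorem free_product_exponential_growth_general
    {G₁ G₂ : Type*} [Group G₁] [Group G₂] [Nontrivial G₁] [Nontrivial G₂]
    (h3 : HasThree G₁ ∨ HasThree G₂)
    (E : Finset (Coprod G₁ G₂)) (hE : Subgroup.closure (E : Set (Coprod G₁ G₂)) = ⊤) :
    ∃ lam : ℝ, 1 < lam ∧ ∃ k₀ : ℕ, ∀ k : ℕ, k₀ ≤ k →
      lam ^ k ≤
        (Nat.card {g : Coprod G₁ G₂ | wordLength (E : Set (Coprod G₁ G₂)) g ≤ k} : ℝ) := by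
  obtain ⟨x, y, hxy⟩ := Coprod.exists_injective_lift_cond h3
  set C := max (max (wordLength (E : Set (Coprod G₁ G₂)) x)
    (wordLength (E : Set (Coprod G₁ G₂)) y)) 1
  refine exists_one_lt_pow_le_of_two_pow_div_le (C := C) (by positivity) fun k => ?_
  exact_mod_cast two_pow_div_le_card_setOf_wordLength_le hE E.finite_toSet hxy
    ((le_max_left _ _).trans (le_max_left _ _)) ((le_max_right _ _).trans (le_max_left _ _)) k

theorem free_product_exponential_growth
    {G₁ G₂ : Type*} [Group G₁] [Group G₂] [Nontrivial G₁] [Nontrivial G₂]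
    [Group.FG G₁] [Group.FG G₂]
    (h3 : HasThree G₁ ∨ HasThree G₂)
    (E : Finset (Coprod G₁ G₂)) (hE : Subgroup.closure (E : Set (Coprod G₁ G₂)) = ⊤) :
    ∃ lam : ℝ, 1 < lam ∧ ∃ k₀ : ℕ, ∀ k : ℕ, k₀ ≤ k →
      lam ^ k ≤
        (Nat.card {g : Coprod G₁ G₂ | wordLength (E : Set (Coprod G₁ G₂)) g ≤ k} : ℝ) :=
  free_product_exponential_growth_general h3 E hE
end
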